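/- arXiv:0907.1505 — 7 statements merged into one kernel-verified Lean document; each statement's English description precedes it below -/
import Mathlib

section
/- For every natural number n with 2 ≤ n ≤ 7 and every real number x, one has 1 - n·x^(n-1) + (2n-1)·x^(2n-2) > 0. In particular, the derivative of z - z^n + z^(2n-1) has no real zeros for 2 ≤ n ≤ 7. -/
/-- For every natural number `n` with `2 ≤ n ≤ 7` and every real `x`,
`1 - n·x^(n-1) + (2n-1)·x^(2n-2) > 0`; in particular the derivative of
`z - z^n + z^(2n-1)` has no real zeros for `2 ≤ n ≤ 7`. -/
theorem stmt_2 (n : ℕ) (hn2 : 2 ≤ n) (hn7 : n ≤ 7) (x : ℝ) :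
    1 - (n : ℝ) * x ^ (n - 1) + (2 * (n : ℝ) - 1) * x ^ (2 * n - 2) > 0 := by
  have h : 2 * n - 2 = (n - 1) * 2 := by omega
  rw [h, pow_mul, sq]
  set w := x ^ (n - 1) with hw
  interval_cases n <;> push_cast <;> nlinarith [sq_nonneg (6*w-2), sq_nonneg (10*w-3), sq_nonneg (14*w-4), sq_nonneg (18*w-5), sq_nonneg (22*w-6), sq_nonneg (26*w-7)]
end

section
/- Let g = X - X² + X³ be a formal power series over ℚ and let f be the formal power series over ℚ with zero constant coefficient such that substituting f into g yields the identity series X. Then the coefficients of f at X¹ through X⁹ are, respectively: 1, 1, 1, 0, -4, -14, -30, -33, 55. In particular f has negative coefficients. -/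
/-!
Modulo `X ^ n`, the equation `f - f² + f³ = X` has only one solution with zero constant term:
`f - p` divides the difference of the two cubic expressions with a unit cofactor, whose constant
term is `1`. So it suffices to exhibit the degree-9 polynomial `p` with the claimed coefficients
and to check that `p - p² + p³ ≡ X (mod X ^ 10)`.
-/

open PowerSeries

namespace PowerSeries

variable {R : Type*} [CommRing R]

theorem dvd_sub_of_dvd_cubic_sub {f p d : R⟦X⟧} (hf : constantCoeff f = 0)
    (hp : constantCoeff p = 0) (h : d ∣ (f - f ^ 2 + f ^ 3) - (p - p ^ 2 + p ^ 3)) :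
    d ∣ f - p := by
  set u : R⟦X⟧ := 1 - (f + p) + (f ^ 2 + f * p + p ^ 2)
  have hu : IsUnit u := isUnit_iff_constantCoeff.mpr (by simp [u, hf, hp])
  have hfactor : (f - f ^ 2 + f ^ 3) - (p - p ^ 2 + p ^ 3) = (f - p) * u := by ring
  rwa [hfactor, hu.dvd_mul_right] at h

theorem coeff_eq_of_X_pow_dvd_sub {f p : R⟦X⟧} {n m : ℕ} (h : X ^ n ∣ f - p) (hm : m < n) :
    coeff m f = coeff m p :=
  sub_eq_zero.mp (by rw [← map_sub]; exact X_pow_dvd_iff.mp h m hm)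

end PowerSeries

/-- Let `g = X - X² + X³` over `ℚ` and let `f` be a power series with zero
constant coefficient such that substituting `f` into `g` (which gives `f - f² + f³`)
yields `X`.  Then the coefficients of `f` at `X¹,…,X⁹` are `1, 1, 1, 0, -4, -14, -30,
-33, 55`; in particular `f` has negative coefficients. -/
theorem stmt_5 (f : PowerSeries ℚ) (hf0 : PowerSeries.constantCoeff (R := ℚ) f = 0)
    (hinv : f - f ^ 2 + f ^ 3 = PowerSeries.X) :
    PowerSeries.coeff (R := ℚ) 1 f = 1 ∧
    PowerSeries.coeff (R := ℚ) 2 f = 1 ∧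
    PowerSeries.coeff (R := ℚ) 3 f = 1 ∧
    PowerSeries.coeff (R := ℚ) 4 f = 0 ∧
    PowerSeries.coeff (R := ℚ) 5 f = -4 ∧
    PowerSeries.coeff (R := ℚ) 6 f = -14 ∧
    PowerSeries.coeff (R := ℚ) 7 f = -30 ∧
    PowerSeries.coeff (R := ℚ) 8 f = -33 ∧
    PowerSeries.coeff (R := ℚ) 9 f = 55 ∧
    ∃ k : ℕ, PowerSeries.coeff (R := ℚ) k f < 0 := by
  obtain ⟨p, hp⟩ : ∃ p : ℚ⟦X⟧,
      p = X + X ^ 2 + X ^ 3 - 4 * X ^ 5 - 14 * X ^ 6 - 30 * X ^ 7 - 33 * X ^ 8 + 55 * X ^ 9 :=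
    ⟨_, rfl⟩
  have hp_approx : X ^ 10 ∣ (p - p ^ 2 + p ^ 3) - X :=
    ⟨-429 - 507 * X - 351 * X ^ 2 + 795 * X ^ 3 + 3803 * X ^ 4 + 8433 * X ^ 5 + 10323 * X ^ 6
      - 1323 * X ^ 7 - 33636 * X ^ 8 - 45336 * X ^ 9 - 64299 * X ^ 10 - 42213 * X ^ 11
      + 47322 * X ^ 12 + 166650 * X ^ 13 + 163713 * X ^ 14 - 92565 * X ^ 15 - 299475 * X ^ 16
      + 166375 * X ^ 17, by rw [hp]; ring⟩
  have hfp : X ^ 10 ∣ f - p :=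
    dvd_sub_of_dvd_cubic_sub hf0 (by simp [hp]) (by rwa [hinv, dvd_sub_comm])
  have hcoeff (m : ℕ) (hm : m < 10) : coeff m f = coeff m p := coeff_eq_of_X_pow_dvd_sub hfp hm
  refine ⟨?_, ?_, ?_, ?_, ?_, ?_, ?_, ?_, ?_, 5, ?_⟩ <;>
    simp [hcoeff, hp, ← map_ofNat C, coeff_C_mul, coeff_X_pow, coeff_X]
end

section
/- Let g = X - X³ + X⁵ be a formal power series over ℚ and let f be the formal power series over ℚ with zero constant coefficient such that substituting f into g yields the identity series X. Then the coefficients of f at X¹, X³, X⁵, X⁷, X⁹, X¹¹, X¹³ are, respectively: 1, 1, 2, 4, 5, -13, -147 (and all coefficients at even powers vanish). In particular f has negative coefficients. -/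
/-!
Substitution into `g = X - X³ + X⁵` is injective on power series without constant term, and
even detects agreement modulo `X ^ n`: `g a - g b = (a - b) * u` with `u ≡ 1` a unit. Hence the
compositional inverse `f` is odd (as `-f(-X)` is another inverse), and it agrees modulo `X ^ 14`
with any polynomial `P` for which `g P ≡ X` modulo `X ^ 14`; such a `P` is checked by expanding.
-/

open PowerSeries

/-- The substitution of `a` into `X - X³ + X⁵`. -/
def quintic {R : Type*} [Ring R] (a : R) : R := a - a ^ 3 + a ^ 5

section CommRing

variable {R : Type*} [CommRing R]

lemma quintic_neg (a : R) : quintic (-a) = -quintic a := by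
  unfold quintic; ring

lemma map_quintic {S F : Type*} [CommRing S] [FunLike F R S] [RingHomClass F R S] (φ : F)
    (a : R) : φ (quintic a) = quintic (φ a) := by
  simp [quintic]

lemma quintic_sub_quintic (a b : R) :
    quintic a - quintic b = (a - b) *
      (1 - (a ^ 2 + a * b + b ^ 2) + (a ^ 4 + a ^ 3 * b + a ^ 2 * b ^ 2 + a * b ^ 3 + b ^ 4)) := by
  unfold quintic; ring

namespace PowerSeries

variable {a b : R⟦X⟧}

lemma exists_isUnit_quintic_sub_quintic (ha : constantCoeff a = 0) (hb : constantCoeff b = 0) :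
    ∃ u : R⟦X⟧, IsUnit u ∧ quintic a - quintic b = (a - b) * u := by
  refine ⟨_, ?_, quintic_sub_quintic a b⟩
  rw [isUnit_iff_constantCoeff]
  simp [ha, hb]

lemma eq_of_quintic_eq (ha : constantCoeff a = 0) (hb : constantCoeff b = 0)
    (h : quintic a = quintic b) : a = b := by
  obtain ⟨u, hu, hab⟩ := exists_isUnit_quintic_sub_quintic ha hb
  rw [h, sub_self, eq_comm, hu.mul_left_eq_zero] at hab
  exact sub_eq_zero.mp hab

lemma X_pow_dvd_sub_of_X_pow_dvd_quintic_sub (ha : constantCoeff a = 0)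
    (hb : constantCoeff b = 0) {n : ℕ} (h : X ^ n ∣ quintic a - quintic b) : X ^ n ∣ a - b := by
  obtain ⟨u, hu, hab⟩ := exists_isUnit_quintic_sub_quintic ha hb
  rwa [hab, hu.dvd_mul_right] at h

lemma neg_rescale_neg_one_eq_of_quintic_eq_X {f : R⟦X⟧} (hf0 : constantCoeff f = 0)
    (hf : quintic f = X) : -rescale (-1) f = f := by
  refine eq_of_quintic_eq ?_ hf0 ?_
  · rw [map_neg, ← coeff_zero_eq_constantCoeff_apply, coeff_rescale,
      coeff_zero_eq_constantCoeff_apply, hf0, mul_zero, neg_zero]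
  · rw [quintic_neg, ← map_quintic, hf, rescale_neg_one_X, neg_neg]

lemma coeff_eq_zero_of_neg_rescale_neg_one_eq [NoZeroDivisors R] [CharZero R] {f : R⟦X⟧}
    (hf : -rescale (-1) f = f) {k : ℕ} (hk : Even k) : coeff k f = 0 := by
  have := congrArg (coeff k) hf
  rwa [map_neg, coeff_rescale, hk.neg_one_pow, one_mul, neg_eq_self] at this

end PowerSeries

end CommRing

namespace PowerSeries

noncomputable def quinticInvTrunc : ℚ⟦X⟧ :=
  X + X ^ 3 + C 2 * X ^ 5 + C 4 * X ^ 7 + C 5 * X ^ 9 - C 13 * X ^ 11 - C 147 * X ^ 13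

lemma quintic_quinticInvTrunc : quintic quinticInvTrunc = X + X ^ 14 * (
    816 * X + 1086 * X ^ 3 + 1232 * X ^ 5 - 1984 * X ^ 7 - 20456 * X ^ 9
    - 84526 * X ^ 11 - 218416 * X ^ 13 - 153822 * X ^ 15 + 58122 * X ^ 17
    + 1336659 * X ^ 19 + 5465488 * X ^ 21 + 13794596 * X ^ 23 + 19135248 * X ^ 25
    - 6323630 * X ^ 27 - 44679060 * X ^ 29 - 188414870 * X ^ 31 - 484354170 * X ^ 33
    - 733864165 * X ^ 35 - 141099500 * X ^ 37 + 1934036710 * X ^ 39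
    + 2975394542 * X ^ 41 + 7705737795 * X ^ 43 + 12993707790 * X ^ 45
    + 6305398155 * X ^ 47 - 30351677265 * X ^ 49 - 68641485507 * X ^ 51) := by
  simp only [quintic, quinticInvTrunc, map_ofNat]
  ring

lemma coeff_eq_coeff_quinticInvTrunc {f : ℚ⟦X⟧} (hf0 : constantCoeff f = 0)
    (hf : quintic f = X) {k : ℕ} (hk : k < 14) : coeff k f = coeff k quinticInvTrunc := by
  have hP0 : constantCoeff quinticInvTrunc = 0 := by simp [quinticInvTrunc]
  have hdvd : X ^ 14 ∣ quintic f - quintic quinticInvTrunc := by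
    rw [hf, quintic_quinticInvTrunc, sub_add_cancel_left]
    exact (dvd_mul_right _ _).neg_right
  have := X_pow_dvd_iff.mp (X_pow_dvd_sub_of_X_pow_dvd_quintic_sub hf0 hP0 hdvd) k hk
  rwa [map_sub, sub_eq_zero] at this

end PowerSeries

/-- Let `g = X - X³ + X⁵` over `ℚ` and let `f` be a power series with zero
constant coefficient such that substituting `f` into `g` (which gives `f - f³ + f⁵`)
yields `X`.  Then the coefficients of `f` at `X¹, X³, X⁵, X⁷, X⁹, X¹¹, X¹³` are
`1, 1, 2, 4, 5, -13, -147`, all coefficients at even powers vanish, and in particular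
`f` has negative coefficients. -/
theorem stmt_6 (f : PowerSeries ℚ) (hf0 : PowerSeries.constantCoeff (R := ℚ) f = 0)
    (hinv : f - f ^ 3 + f ^ 5 = PowerSeries.X) :
    PowerSeries.coeff (R := ℚ) 1 f = 1 ∧
    PowerSeries.coeff (R := ℚ) 3 f = 1 ∧
    PowerSeries.coeff (R := ℚ) 5 f = 2 ∧
    PowerSeries.coeff (R := ℚ) 7 f = 4 ∧
    PowerSeries.coeff (R := ℚ) 9 f = 5 ∧
    PowerSeries.coeff (R := ℚ) 11 f = -13 ∧
    PowerSeries.coeff (R := ℚ) 13 f = -147 ∧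
    (∀ k : ℕ, Even k → PowerSeries.coeff (R := ℚ) k f = 0) ∧
    ∃ k : ℕ, PowerSeries.coeff (R := ℚ) k f < 0 := by
  have htrunc {k : ℕ} (hk : k < 14) := coeff_eq_coeff_quinticInvTrunc hf0 hinv hk
  have h11 : coeff 11 f = -13 := by simp [htrunc, quinticInvTrunc, coeff_X_pow, coeff_X]
  refine ⟨?_, ?_, ?_, ?_, ?_, h11, ?_,
    fun k hk => coeff_eq_zero_of_neg_rescale_neg_one_eq
      (neg_rescale_neg_one_eq_of_quintic_eq_X hf0 hinv) hk,
    11, by rw [h11]; norm_num⟩ <;>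
  simp [htrunc, quinticInvTrunc, coeff_X_pow, coeff_X]
end

section
/- Let g = X - X⁴ + X⁷ be a formal power series over ℚ and let f be the formal power series over ℚ with zero constant coefficient such that substituting f into g yields the identity series X. Then the coefficients of f at X¹, X⁴, X⁷, X¹⁰, X¹³, X¹⁶, X¹⁹, X²², X²⁵ are, respectively: 1, 1, 3, 11, 42, 153, 469, 690, -5967 (and all other coefficients up to degree 25 vanish). In particular f has a negative coefficient. -/
/-!
For `x` and `y` divisible by `a`, the difference `g x - g y` of `g x = x + x² q(x)` is `x - y`
up to a term whose `a`-adic order exceeds that of `x - y`; so `g` is injective modulo `a ^ N`.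
Applied in `ℚ⟦X⟧` with `a = X` and `g x = x - x⁴ + x⁷`, the series `f` therefore agrees up to
degree `25` with any polynomial `p` satisfying `p - p⁴ + p⁷ ≡ X` modulo `X ^ 26`. The polynomial
with the claimed coefficients is such a `p`, as a ring computation in `ℚ⟦X⟧ ⧸ (X ^ 26)` shows.
-/

open PowerSeries

section Injectivity

variable {R : Type*} [CommRing R] {a x y : R}

theorem pow_succ_dvd_sq_mul_eval_sub (q : Polynomial R) {n : ℕ} (hx : a ∣ x) (hy : a ∣ y)
    (hxy : a ^ n ∣ x - y) : a ^ (n + 1) ∣ x ^ 2 * q.eval x - y ^ 2 * q.eval y := by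
  have hq : a ^ n ∣ q.eval x - q.eval y := hxy.trans (Polynomial.sub_dvd_eval_sub x y q)
  have e : x ^ 2 * q.eval x - y ^ 2 * q.eval y
      = (x + y) * (x - y) * q.eval x + y ^ 2 * (q.eval x - q.eval y) := by ring
  rw [e, pow_succ']
  exact dvd_add (dvd_mul_of_dvd_left (mul_dvd_mul (dvd_add hx hy) hxy) _)
    (mul_dvd_mul (dvd_pow hy (two_ne_zero (α := ℕ))) hq)

theorem pow_dvd_sub_of_pow_dvd_add_sq_mul_eval_sub (q : Polynomial R) {N : ℕ} (hx : a ∣ x)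
    (hy : a ∣ y) (h : a ^ N ∣ (x + x ^ 2 * q.eval x) - (y + y ^ 2 * q.eval y)) :
    a ^ N ∣ x - y := by
  suffices ∀ n ≤ N, a ^ n ∣ x - y from this N le_rfl
  intro n hn
  induction n with
  | zero => simp
  | succ n ih =>
    have e : x - y = ((x + x ^ 2 * q.eval x) - (y + y ^ 2 * q.eval y))
        - (x ^ 2 * q.eval x - y ^ 2 * q.eval y) := by ring
    rw [e]
    exact dvd_sub ((pow_dvd_pow a hn).trans h)
      (pow_succ_dvd_sq_mul_eval_sub q hx hy (ih (by omega)))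

end Injectivity

theorem PowerSeries.coeff_ofNat_mul {R : Type*} [CommRing R] {a n : ℕ} [a.AtLeastTwo]
    (φ : PowerSeries R) : coeff n ((ofNat(a) : PowerSeries R) * φ) = ofNat(a) * coeff n φ := by
  rw [← map_ofNat C, coeff_C_mul]

section TruncInverse

variable {R : Type*} [CommRing R]

/-- The coefficients come from the recursion `f = X + f⁴ - f⁷`. -/
def truncInverse (x : R) : R :=
  x + x ^ 4 + 3 * x ^ 7 + 11 * x ^ 10 + 42 * x ^ 13 + 153 * x ^ 16 + 469 * x ^ 19
    + 690 * x ^ 22 - 5967 * x ^ 25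

theorem map_truncInverse {S : Type*} [CommRing S] (φ : R →+* S) (x : R) :
    φ (truncInverse x) = truncInverse (φ x) := by
  simp [truncInverse, map_ofNat]

theorem dvd_truncInverse (x : R) : x ∣ truncInverse x := by
  unfold truncInverse
  apply_rules [dvd_add, dvd_sub, Dvd.dvd.mul_left, dvd_pow_self, dvd_refl] <;> norm_num

theorem truncInverse_sub_pow_add_pow {x : R} (hx : x ^ 26 = 0) :
    truncInverse x - truncInverse x ^ 4 + truncInverse x ^ 7 = x := by
  have hvanish : ∀ n, 26 ≤ n → x ^ n = 0 := fun n hn => pow_eq_zero_of_le hn hx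
  unfold truncInverse
  ring_nf
  simp [hvanish]

theorem pow_dvd_truncInverse_sub_pow_add_pow_sub (a : R) :
    a ^ 26 ∣ truncInverse a - truncInverse a ^ 4 + truncInverse a ^ 7 - a := by
  rw [← Ideal.mem_span_singleton, ← Ideal.Quotient.eq_zero_iff_mem]
  have ha : Ideal.Quotient.mk (Ideal.span {a ^ 26}) a ^ 26 = 0 := by
    rw [← map_pow, Ideal.Quotient.eq_zero_iff_mem]
    exact Ideal.mem_span_singleton_self _
  simpa [map_truncInverse, sub_eq_zero] using truncInverse_sub_pow_add_pow ha

end TruncInverse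

/-- Let `g = X - X⁴ + X⁷` over `ℚ` and let `f` be a power series with zero
constant coefficient such that substituting `f` into `g` (which gives `f - f⁴ + f⁷`)
yields `X`.  Then the coefficients of `f` at `X¹, X⁴, X⁷, X¹⁰, X¹³, X¹⁶, X¹⁹, X²², X²⁵`
are `1, 1, 3, 11, 42, 153, 469, 690, -5967`, all other coefficients up to degree `25`
vanish, and in particular `f` has a negative coefficient. -/
theorem stmt_7 (f : PowerSeries ℚ) (hf0 : PowerSeries.constantCoeff f = 0)
    (hinv : f - f ^ 4 + f ^ 7 = PowerSeries.X) :
    PowerSeries.coeff 1 f = 1 ∧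
    PowerSeries.coeff 4 f = 1 ∧
    PowerSeries.coeff 7 f = 3 ∧
    PowerSeries.coeff 10 f = 11 ∧
    PowerSeries.coeff 13 f = 42 ∧
    PowerSeries.coeff 16 f = 153 ∧
    PowerSeries.coeff 19 f = 469 ∧
    PowerSeries.coeff 22 f = 690 ∧
    PowerSeries.coeff 25 f = -5967 ∧
    (∀ k : ℕ, k ≤ 25 → k % 3 ≠ 1 → PowerSeries.coeff k f = 0) ∧
    ∃ k : ℕ, PowerSeries.coeff k f < 0 := by
  set p : PowerSeries ℚ := truncInverse X
  have hclose : X ^ 26 ∣ f - p := by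
    refine pow_dvd_sub_of_pow_dvd_add_sq_mul_eval_sub
      (Polynomial.X ^ 5 - Polynomial.X ^ 2) (X_dvd_iff.mpr hf0) (dvd_truncInverse X) ?_
    have e : (f + f ^ 2 * (f ^ 5 - f ^ 2)) - (p + p ^ 2 * (p ^ 5 - p ^ 2))
        = -(p - p ^ 4 + p ^ 7 - X) := by linear_combination hinv
    simpa only [Polynomial.eval_sub, Polynomial.eval_pow, Polynomial.eval_X, e, dvd_neg]
      using pow_dvd_truncInverse_sub_pow_add_pow_sub (X : PowerSeries ℚ)
  have hcoeff : ∀ n < 26, coeff n f = coeff n p := fun n hn =>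
    sub_eq_zero.mp (by simpa using X_pow_dvd_iff.mp hclose n hn)
  have hzero : ∀ k : ℕ, k ≤ 25 → k % 3 ≠ 1 → coeff k f = 0 := by
    intro k hk hk3
    rw [hcoeff k (by omega)]
    interval_cases k <;> simp_all [p, truncInverse, coeff_X_pow, coeff_X, coeff_ofNat_mul]
  refine ⟨?_, ?_, ?_, ?_, ?_, ?_, ?_, ?_, ?_, hzero, 25, ?_⟩ <;>
    rw [hcoeff _ (by norm_num)] <;> simp [p, truncInverse, coeff_X_pow, coeff_X, coeff_ofNat_mul]
end

section
/- Let g = X - X⁵ + X⁹ be a formal power series over ℚ and let f be the formal power series over ℚ with zero constant coefficient such that substituting f into g yields the identity series X. Then the coefficient of f at X⁵⁷ is strictly negative, while all coefficients of f at X^k with k < 57 are nonnegative. -/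
/-!
Write the inverse as `f = X ψ(X⁴)`; then `ψ = 1 + y ψ⁵ - y² ψ⁹` with `y = X⁴`, so the first fifteen
coefficients of `ψ` are integers obtained by fixed-point iteration on coefficient lists, which the
kernel evaluates. Because `t - t⁵ + t⁹` has linear coefficient `1`, two series with zero
constant term whose images agree modulo `X^N` agree themselves modulo `X^N`; so the coefficients of
`f` up to `X⁵⁷` are `0` or `ψ₀, …, ψ₁₄`, and `ψ₁₄ = -3969959727` is the first negative one.
-/

open PowerSeries

namespace PowerSeries

variable {R : Type*} [CommRing R]

theorem X_mul_sub_dvd_pow_sub_pow {f p : R⟦X⟧} (hf : constantCoeff f = 0)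
    (hp : constantCoeff p = 0) {m : ℕ} (hm : 2 ≤ m) : X * (f - p) ∣ f ^ m - p ^ m := by
  induction m, hm using Nat.le_induction with
  | base =>
    rw [sq_sub_sq]
    exact mul_dvd_mul (X_dvd_iff.mpr (by simp [hf, hp])) dvd_rfl
  | succ m hm ih =>
    have hpm : X ∣ p ^ m := (X_dvd_iff.mpr hp).trans (dvd_pow_self p (by omega))
    rw [show f ^ (m + 1) - p ^ (m + 1) = f * (f ^ m - p ^ m) + (f - p) * p ^ m by ring]
    exact dvd_add (ih.mul_left f) (mul_comm X (f - p) ▸ mul_dvd_mul_left _ hpm)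

theorem X_pow_dvd_of_X_mul_dvd_sub {e d : R⟦X⟧} {N : ℕ} (h : X * e ∣ e - d) (hd : X ^ N ∣ d) :
    X ^ N ∣ e := by
  suffices ∀ k ≤ N, X ^ k ∣ e from this N le_rfl
  intro k hk
  induction k with
  | zero => exact one_dvd e
  | succ k ih =>
    have hX : X ^ (k + 1) ∣ e - d := by
      rw [pow_succ']
      exact (mul_dvd_mul_left X (ih (by omega))).trans h
    simpa using dvd_add hX ((pow_dvd_pow X hk).trans hd)

theorem X_pow_dvd_sub_of_X_pow_dvd_sub_pow_add_pow {f p : R⟦X⟧} (hf : constantCoeff f = 0)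
    (hp : constantCoeff p = 0) {a b N : ℕ} (ha : 2 ≤ a) (hb : 2 ≤ b)
    (h : X ^ N ∣ (f - f ^ a + f ^ b) - (p - p ^ a + p ^ b)) : X ^ N ∣ f - p := by
  refine X_pow_dvd_of_X_mul_dvd_sub ?_ h
  rw [show f - p - ((f - f ^ a + f ^ b) - (p - p ^ a + p ^ b))
      = (f ^ a - p ^ a) - (f ^ b - p ^ b) by ring]
  exact dvd_sub (X_mul_sub_dvd_pow_sub_pow hf hp ha) (X_mul_sub_dvd_pow_sub_pow hf hp hb)

/-- The substitution `f = X ψ(X^m)` turns `f - f^(m+1) + f^(2m+1) = X` into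
`ψ = 1 + y ψ^(m+1) - y² ψ^(2m+1)` with `y = X^m`. -/
theorem X_pow_dvd_X_mul_expand_sub (m N : ℕ) (hm : m ≠ 0) {ψ : R⟦X⟧}
    (h : X ^ N ∣ ψ - (1 + X * ψ ^ (m + 1) - X ^ 2 * ψ ^ (2 * m + 1))) :
    X ^ (m * N + 1) ∣ (X * expand m hm ψ - (X * expand m hm ψ) ^ (m + 1)
      + (X * expand m hm ψ) ^ (2 * m + 1)) - X := by
  have h' := map_dvd (expand m hm) h
  simp only [map_sub, map_add, map_mul, map_pow, map_one, expand_X] at h'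
  rw [pow_succ', pow_mul]
  convert mul_dvd_mul_left X h' using 1
  ring

end PowerSeries

namespace CoeffList

variable {R : Type*} [CommRing R]

noncomputable def toPowerSeries : List R → R⟦X⟧
  | [] => 0
  | a :: l => C a + X * toPowerSeries l

@[simp]
theorem toPowerSeries_nil : toPowerSeries ([] : List R) = 0 := rfl

@[simp]
theorem toPowerSeries_cons (a : R) (l : List R) :
    toPowerSeries (a :: l) = C a + X * toPowerSeries l := rfl

theorem coeff_toPowerSeries (l : List R) (k : ℕ) : coeff k (toPowerSeries l) = l.getD k 0 := by
  induction l generalizing k with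
  | nil => simp
  | cons a l ih => cases k <;> simp [ih]

theorem toPowerSeries_map_neg (l : List R) : toPowerSeries (l.map (- ·)) = -toPowerSeries l := by
  induction l with
  | nil => simp
  | cons a l ih =>
    simp only [List.map_cons, toPowerSeries_cons, map_neg, ih]
    ring

theorem toPowerSeries_map_mul_left (a : R) (l : List R) :
    toPowerSeries (l.map (a * ·)) = C a * toPowerSeries l := by
  induction l with
  | nil => simp
  | cons b l ih =>
    simp only [List.map_cons, toPowerSeries_cons, map_mul, ih]
    ring

def add : List R → List R → List R
  | [], m => m
  | a :: l, [] => a :: l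
  | a :: l, b :: m => (a + b) :: add l m

@[simp]
theorem toPowerSeries_add (l m : List R) :
    toPowerSeries (add l m) = toPowerSeries l + toPowerSeries m := by
  induction l generalizing m with
  | nil => simp [add]
  | cons a l ih =>
    cases m with
    | nil => simp [add]
    | cons b m =>
      simp only [add, toPowerSeries_cons, map_add, ih]
      ring

def mul : List R → List R → List R
  | [], _ => []
  | a :: l, m => add (m.map (a * ·)) (0 :: mul l m)

@[simp]
theorem toPowerSeries_mul (l m : List R) :
    toPowerSeries (mul l m) = toPowerSeries l * toPowerSeries m := by
  induction l with
  | nil => simp [mul]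
  | cons a l ih =>
    simp only [mul, toPowerSeries_add, toPowerSeries_map_mul_left, toPowerSeries_cons, map_zero,
      ih, zero_add]
    ring

theorem X_pow_dvd_toPowerSeries_sub_take (n : ℕ) (l : List R) :
    X ^ n ∣ toPowerSeries l - toPowerSeries (l.take n) := by
  induction n generalizing l with
  | zero => simp
  | succ n ih =>
    cases l with
    | nil => simp
    | cons a l =>
      simp only [List.take_succ_cons, toPowerSeries_cons, add_sub_add_left_eq_sub, ← mul_sub,
        pow_succ']
      exact mul_dvd_mul_left X (ih l)

def truncPow (n : ℕ) (l : List R) : ℕ → List R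
  | 0 => [1]
  | k + 1 => (mul (truncPow n l k) l).take n

theorem X_pow_dvd_pow_sub_truncPow (n : ℕ) (l : List R) (k : ℕ) :
    X ^ n ∣ toPowerSeries l ^ k - toPowerSeries (truncPow n l k) := by
  induction k with
  | zero => simp [truncPow]
  | succ k ih =>
    set P := truncPow n l k
    rw [truncPow, show toPowerSeries l ^ (k + 1) - toPowerSeries ((mul P l).take n)
      = (toPowerSeries l ^ k - toPowerSeries P) * toPowerSeries l
        + (toPowerSeries (mul P l) - toPowerSeries ((mul P l).take n))
      by simp only [toPowerSeries_mul]; ring]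
    exact dvd_add (ih.mul_right _) (X_pow_dvd_toPowerSeries_sub_take n _)

end CoeffList

open CoeffList

section ReducedInverse

variable {R : Type*} [CommRing R]

def reducedInverseStep (m n : ℕ) (l : List R) : List R :=
  (add [1] (add (0 :: truncPow n l (m + 1))
    (0 :: 0 :: (truncPow n l (2 * m + 1)).map (- ·)))).take n

theorem X_pow_dvd_toPowerSeries_reducedInverseStep_sub (m n : ℕ) (l : List R) :
    X ^ n ∣ toPowerSeries (reducedInverseStep m n l)
      - (1 + X * toPowerSeries l ^ (m + 1) - X ^ 2 * toPowerSeries l ^ (2 * m + 1)) := by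
  set P := truncPow n l (m + 1)
  set Q := truncPow n l (2 * m + 1)
  set L := add [1] (add (0 :: P) (0 :: 0 :: Q.map (- ·)))
  have hL : toPowerSeries L = 1 + X * toPowerSeries P - X ^ 2 * toPowerSeries Q := by
    simp only [L, toPowerSeries_add, toPowerSeries_cons, toPowerSeries_nil, toPowerSeries_map_neg,
      map_one, map_zero, mul_zero, add_zero, zero_add]
    ring
  show X ^ n ∣ toPowerSeries (L.take n) - _
  rw [show toPowerSeries (L.take n)
      - (1 + X * toPowerSeries l ^ (m + 1) - X ^ 2 * toPowerSeries l ^ (2 * m + 1))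
      = -(toPowerSeries L - toPowerSeries (L.take n))
        - X * (toPowerSeries l ^ (m + 1) - toPowerSeries P)
        + X ^ 2 * (toPowerSeries l ^ (2 * m + 1) - toPowerSeries Q) by rw [hL]; ring]
  exact dvd_add
    (dvd_sub (X_pow_dvd_toPowerSeries_sub_take n L).neg_right
      ((X_pow_dvd_pow_sub_truncPow n l _).mul_left X))
    ((X_pow_dvd_pow_sub_truncPow n l _).mul_left _)

end ReducedInverse

/-- The coefficients `ψ₀, …, ψ₁₄` of `ψ`, where `f = X ψ(X⁴)`. Each step of the iteration fixes
one more coefficient, and `4 * 15 + 1 ≥ 58`. -/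
def reducedInverseCoeffs : List ℤ := (reducedInverseStep 4 15)^[15] []

theorem reducedInverseStep_reducedInverseCoeffs :
    reducedInverseStep 4 15 reducedInverseCoeffs = reducedInverseCoeffs := by
  decide +kernel

theorem reducedInverseCoeffs_getD_sign :
    reducedInverseCoeffs.getD 14 0 < 0 ∧ ∀ i < 14, 0 ≤ reducedInverseCoeffs.getD i 0 := by
  decide +kernel

noncomputable def inverseApprox : ℚ⟦X⟧ :=
  X * expand 4 four_ne_zero (map (Int.castRingHom ℚ) (toPowerSeries reducedInverseCoeffs))

theorem coeff_succ_inverseApprox (j : ℕ) :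
    coeff (j + 1) inverseApprox =
      if 4 ∣ j then (reducedInverseCoeffs.getD (j / 4) 0 : ℚ) else 0 := by
  simp [inverseApprox, coeff_succ_X_mul, coeff_expand, coeff_map, coeff_toPowerSeries]

theorem X_pow_dvd_sub_inverseApprox {f : ℚ⟦X⟧} (hf0 : constantCoeff f = 0)
    (hinv : f - f ^ 5 + f ^ 9 = X) : X ^ 58 ∣ f - inverseApprox := by
  set ψ : ℚ⟦X⟧ := map (Int.castRingHom ℚ) (toPowerSeries reducedInverseCoeffs)
  have hψ : X ^ 15 ∣ ψ - (1 + X * ψ ^ 5 - X ^ 2 * ψ ^ 9) := by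
    have h := X_pow_dvd_toPowerSeries_reducedInverseStep_sub 4 15 reducedInverseCoeffs
    rw [reducedInverseStep_reducedInverseCoeffs] at h
    simpa [ψ] using map_dvd (map (Int.castRingHom ℚ)) h
  refine X_pow_dvd_sub_of_X_pow_dvd_sub_pow_add_pow hf0 (by simp [inverseApprox])
    (a := 5) (b := 9) (by norm_num) (by norm_num) ?_
  rw [hinv, ← neg_sub, dvd_neg]
  exact (pow_dvd_pow X (by norm_num)).trans (X_pow_dvd_X_mul_expand_sub 4 15 four_ne_zero hψ)

/-- Let `g = X - X⁵ + X⁹` over `ℚ` and let `f` be a power series with zero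
constant coefficient such that substituting `f` into `g` (which gives `f - f⁵ + f⁹`)
yields `X`.  Then the coefficient of `f` at `X⁵⁷` is strictly negative while all
coefficients at `X^k` with `k < 57` are nonnegative. -/
theorem stmt_8 (f : PowerSeries ℚ) (hf0 : PowerSeries.constantCoeff f = 0)
    (hinv : f - f ^ 5 + f ^ 9 = PowerSeries.X) :
    PowerSeries.coeff 57 f < 0 ∧ ∀ k : ℕ, k < 57 → 0 ≤ PowerSeries.coeff k f := by
  have hcoeff : ∀ k < 58, coeff k f = coeff k inverseApprox := fun k hk =>
    sub_eq_zero.mp (by simpa using X_pow_dvd_iff.mp (X_pow_dvd_sub_inverseApprox hf0 hinv) k hk)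
  obtain ⟨hneg, hnonneg⟩ := reducedInverseCoeffs_getD_sign
  refine ⟨?_, fun k hk => ?_⟩
  · rw [hcoeff 57 (by norm_num), coeff_succ_inverseApprox 56]
    simpa using hneg
  · rw [hcoeff k (by omega)]
    rcases k with _ | j
    · simp [inverseApprox]
    · rw [coeff_succ_inverseApprox j]
      split_ifs
      · exact_mod_cast hnonneg _ (by omega)
      · exact le_rfl
end

section
/- Let R be a non-unital, non-associative ring (an additive abelian group with a biadditive multiplication) whose additive group has no 2-torsion (i.e., 2x = 0 implies x = 0), and suppose the multiplication is anti-associative: (a·b)·c + a·(b·c) = 0 for all a, b, c ∈ R. Then every product of four elements vanishes; in particular ((a·b)·c)·d = 0 for all a, b, c, d ∈ R (and consequently, by anti-associativity, all five parenthesizations of a·b·c·d vanish). -/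
/-- In a non-unital, non-associative ring `R` whose additive group has no
2-torsion and whose multiplication is anti-associative, every product of four elements
vanishes; in particular `((a·b)·c)·d = 0` for all `a, b, c, d`. -/
theorem stmt_12 (R : Type*) [NonUnitalNonAssocRing R]
    (htor : ∀ x : R, x + x = 0 → x = 0)
    (hanti : ∀ a b c : R, (a * b) * c + a * (b * c) = 0) :
    ∀ a b c d : R, ((a * b) * c) * d = 0 := by
  have h : ∀ a b c : R, (a * b) * c = -(a * (b * c)) := fun a b c =>
    eq_neg_of_add_eq_zero_left (hanti a b c)
  intro a b c d
  apply htor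
  have h1 : ((a * b) * c) * d = a * (b * (c * d)) := by
    rw [h (a*b) c d, h a b (c*d), neg_neg]
  have h2 : ((a * b) * c) * d = -(a * (b * (c * d))) := by
    rw [h a b c, neg_mul, h a (b*c) d, h b c d, neg_neg, mul_neg]
  rw [h1]
  nth_rewrite 2 [h1.symm.trans h2]
  rw [add_neg_cancel]
end

section
/- Fix a natural number n ≥ 2. Define a sequence A : ℕ → ℕ by A(0) = 1 and, for l ≥ 1, A(l) = Σ A(l₂)·A(l₃)···A(lₙ), the sum running over all (n-1)-tuples (l₂, …, lₙ) of nonnegative integers with l₂ + ⋯ + lₙ = l - 1. Let F be the formal power series over ℚ given by F = Σ_{l ≥ 0} A(l)·X^(l(n-1)+1), and let G = X·(1 + X^(n-1))⁻¹ (a well-defined power series since 1 + X^(n-1) has constant term 1). Then substituting F into G yields the identity series X; that is, F is the formal compositional inverse of G. -/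
/-!
Put `m = n - 1` and `B(Y) = ∑ A(l) Yˡ`. The recurrence for `A` says exactly that
`B = 1 + Y·Bᵐ`, and `F = X·B(Xᵐ)`. Substituting `Y = Xᵐ` gives `B(Xᵐ) = 1 + Fᵐ`, so
`F = X·(1 + Fᵐ)`, which is the claim.
-/

open Finset PowerSeries

namespace PowerSeries

variable {R : Type*}

theorem coeff_pow_eq_sum_antidiagonalTuple [CommSemiring R] (k d : ℕ) (φ : R⟦X⟧) :
    coeff d (φ ^ k) = ∑ x ∈ Nat.antidiagonalTuple k d, ∏ i, coeff (x i) φ := by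
  have hprod := coeff_prod (fun _ : Fin k => φ) d univ
  rw [prod_const, card_univ, Fintype.card_fin] at hprod
  rw [hprod, finsuppAntidiag, sum_map, ← piAntidiag_univ_fin_eq_antidiagonalTuple]
  exact sum_attach _ fun x : Fin k → ℕ => ∏ i, coeff (x i) φ

theorem mk_eq_one_add_X_mul_pow [CommSemiring R] {a : ℕ → R} (k : ℕ) (h0 : a 0 = 1)
    (hrec : ∀ l, a (l + 1) = ∑ x ∈ Nat.antidiagonalTuple k l, ∏ i, a (x i)) :
    mk a = 1 + X * mk a ^ k := by
  ext (_ | l)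
  · simp [h0]
  · simp [coeff_pow_eq_sum_antidiagonalTuple, hrec]

theorem eq_X_mul_expand_mk [CommRing R] {k : ℕ} (hk : k ≠ 0) {φ : R⟦X⟧} {a : ℕ → R}
    (h : ∀ l, coeff (l * k + 1) φ = a l)
    (h' : ∀ j, (¬ ∃ l, j = l * k + 1) → coeff j φ = 0) :
    φ = X * expand k hk (mk a) := by
  ext (_ | j)
  · simpa using h' 0 (by omega)
  · rw [coeff_succ_X_mul, coeff_expand, coeff_mk]
    split_ifs with hdvd
    · obtain ⟨l, rfl⟩ := hdvd
      rw [Nat.mul_div_cancel_left _ (Nat.pos_of_ne_zero hk), ← h l, mul_comm]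
    · exact h' _ fun ⟨l, hl⟩ => hdvd ⟨l, by rw [mul_comm]; omega⟩

end PowerSeries

/-- Fix `n ≥ 2`.  Let `A : ℕ → ℕ` satisfy `A 0 = 1` and, for `l ≥ 1`,
`A l = Σ A l₂ ⋯ A lₙ`, the sum over all `(n-1)`-tuples of nonnegative integers with
`l₂ + ⋯ + lₙ = l - 1`.  Let `F` be the power series over `ℚ` whose coefficient at
`X^(l(n-1)+1)` is `A l` and whose other coefficients vanish, and let
`G = X·(1 + X^(n-1))⁻¹`.  Then substituting `F` into `G`, which gives
`F·(1 + F^(n-1))⁻¹`, yields the identity series `X`; that is, `F` is the formal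
compositional inverse of `G`. -/
theorem stmt_15 (n : ℕ) (hn : 2 ≤ n) (A : ℕ → ℕ) (hA0 : A 0 = 1)
    (hArec : ∀ l : ℕ, 1 ≤ l →
      A l = ∑ x ∈ Finset.Nat.antidiagonalTuple (n - 1) (l - 1), ∏ i, A (x i))
    (F : PowerSeries ℚ)
    (hF : ∀ l : ℕ, PowerSeries.coeff (l * (n - 1) + 1) F = A l)
    (hF' : ∀ k : ℕ, (¬ ∃ l : ℕ, k = l * (n - 1) + 1) → PowerSeries.coeff k F = 0) :
    F * (1 + F ^ (n - 1))⁻¹ = PowerSeries.X := by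
  have hm : n - 1 ≠ 0 := by omega
  set B : ℚ⟦X⟧ := mk fun l => (A l : ℚ)
  have hB : B = 1 + X * B ^ (n - 1) :=
    mk_eq_one_add_X_mul_pow _ (by simp [hA0]) fun l => by simp [hArec (l + 1)]
  set E := expand (n - 1) hm B
  have hE : E = 1 + X ^ (n - 1) * E ^ (n - 1) := by
    simpa [E, expand_X] using congrArg (expand (n - 1) hm) hB
  have hFE : F = X * E := eq_X_mul_expand_mk hm hF hF'
  have hE_eq : 1 + F ^ (n - 1) = E := by rw [hFE, mul_pow, ← hE]
  have hE0 : constantCoeff E ≠ 0 := by simp [E, B, hA0]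
  rw [hE_eq, hFE, mul_assoc, PowerSeries.mul_inv_cancel _ hE0, mul_one]
end
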